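/- Let X be a perfect group, G a group, and let α, β : G → Aut(X) be two actions of G on X by automorphisms. Suppose Z is a central subgroup of X such that α(g)(x)·(β(g)(x))⁻¹ ∈ Z for all g ∈ G and x ∈ X. Then α = β. -/

import Mathlib

open scoped commutatorElement

lemma commutator_central_mul {X : Type*} [Group X] (u v z w : X)
    (hz : ∀ t, t * z = z * t) (hw : ∀ t, t * w = w * t) :
    ⁅z * u, w * v⁆ = ⁅u, v⁆ := by
  have step1 : ⁅z * u, w * v⁆ = ⁅u, w * v⁆ := by
    rw [commutatorElement_def, commutatorElement_def]
    calc (z*u) * (w*v) * (z*u)⁻¹ * (w*v)⁻¹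
        = z * (u * (w*v) * u⁻¹) * z⁻¹ * (w*v)⁻¹ := by group
      _ = (u * (w*v) * u⁻¹) * z * z⁻¹ * (w*v)⁻¹ := by rw [hz]
      _ = u * (w*v) * u⁻¹ * (w*v)⁻¹ := by group
  have step2 : ⁅u, w * v⁆ = ⁅u, v⁆ := by
    rw [commutatorElement_def, commutatorElement_def]
    calc u * (w*v) * u⁻¹ * (w*v)⁻¹
        = (u * w) * (v * u⁻¹ * v⁻¹ * w⁻¹) := by group
      _ = (w * u) * (v * u⁻¹ * v⁻¹ * w⁻¹) := by rw [hw]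
      _ = w * (u * v * u⁻¹ * v⁻¹) * w⁻¹ := by group
      _ = (u * v * u⁻¹ * v⁻¹) * w * w⁻¹ := by rw [hw]
      _ = u * v * u⁻¹ * v⁻¹ := by group
  rw [step1, step2]

/-- Two actions of a group `G` on a perfect group `X` that agree modulo a central
subgroup `Z` are equal. -/
theorem actions_eq_of_agree_mod_center {G X : Type*} [Group G] [Group X]
    (hperf : commutator X = ⊤)
    (α β : G →* MulAut X) (Z : Subgroup X) (hZ : Z ≤ Subgroup.center X)
    (h : ∀ (g : G) (x : X), α g x * (β g x)⁻¹ ∈ Z) :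
    α = β := by
  ext g x
  have hx : x ∈ Subgroup.closure (commutatorSet X) := by
    rw [← commutator_eq_closure, hperf]; trivial
  show α g x = β g x
  induction hx using Subgroup.closure_induction with
  | mem y hy =>
      obtain ⟨a, b, rfl⟩ := hy
      have ha := Subgroup.mem_center_iff.mp (hZ (h g a))
      have hb := Subgroup.mem_center_iff.mp (hZ (h g b))
      have ea : α g a = (α g a * (β g a)⁻¹) * β g a := by group
      have eb : α g b = (α g b * (β g b)⁻¹) * β g b := by group
      rw [map_commutatorElement, map_commutatorElement, ea, eb,
        commutator_central_mul _ _ _ _ ha hb]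
  | one => simp
  | mul a b _ _ iha ihb => simp [map_mul, iha, ihb]
  | inv a _ iha => simp [map_inv, iha]
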